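/- arXiv:2603.19494 — 3 statements merged into one kernel-verified Lean document; each statement's English description precedes it below -/
import Mathlib

section
/- Let I = S ⊔ T be a decomposition of a finite set into disjoint subsets, let S' ⊆ I, and put A = S ∩ S' and C = T ∩ S'. Then for any parking function Φ on S and any parking function Ψ on T, one has park( (Φ|Ψ)_{∩S'} ) = park(Φ_{∩A}) | park(Ψ_{∩C}). (This identity yields the compatibility of the concatenation product and the parkization coproduct on the species of parking functions.) -/
/-!
Parkization only depends on the running excess `e = |Φ| - ℓ(Φ)` of the blocks kept so far: a
block `B` is kept iff `e + |B| ≥ 1`, after which the excess becomes `e + |B| - 1`. Scanning is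
left to right, so parkizing `Γ₁ | Γ₂` yields `park Γ₁` followed by the parkization of `Γ₂`
started from the excess left by `Γ₁`. For a restriction `Φ_{∩A}` of a parking function every
suffix has at most as many elements as blocks, which forces that excess back to `0`. Finally
the blocks of `Φ` lie in `S` and those of `Ψ` in `T`, so `(Φ|Ψ)_{∩S'} = Φ_{∩A} | Ψ_{∩C}`.
-/

def IsWeakSetComp {α : Type*} [DecidableEq α] (I : Finset α) (L : List (Finset α)) : Prop :=
  L.Pairwise Disjoint ∧ L.foldr (· ∪ ·) ∅ = I

def IsParkingFunction {α : Type*} [DecidableEq α] (I : Finset α) (L : List (Finset α)) : Prop :=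
  IsWeakSetComp I L ∧ L.length = I.card ∧
    ∀ k, 1 ≤ k → k ≤ L.length → k ≤ ((L.take k).map Finset.card).sum

def parkAux {α : Type*} [DecidableEq α] :
    List (Finset α) → List (Finset α) → List (Finset α)
  | Φ, [] => Φ
  | Φ, B :: Γ =>
    if (Φ.map Finset.card).sum + B.card ≥ Φ.length + 1 then parkAux (Φ ++ [B]) Γ
    else parkAux Φ Γ

def park {α : Type*} [DecidableEq α] (Γ : List (Finset α)) : List (Finset α) :=
  parkAux [] Γ

section ParkFrom

variable {α : Type*}

/-- Parkization started with excess `e`. -/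
def parkFrom : ℕ → List (Finset α) → List (Finset α)
  | _, [] => []
  | e, B :: Γ => if 1 ≤ e + B.card then B :: parkFrom (e + B.card - 1) Γ else parkFrom e Γ

/-- The excess left after `parkFrom e Γ`. A discarded block has `e + |B| = 0`, so the
truncated subtraction `e + |B| - 1` is the new excess in both cases. -/
def parkExcess : ℕ → List (Finset α) → ℕ
  | e, [] => e
  | e, B :: Γ => parkExcess (e + B.card - 1) Γ

theorem parkAux_eq_append_parkFrom [DecidableEq α] (Γ : List (Finset α)) :
    ∀ Φ : List (Finset α), Φ.length ≤ (Φ.map Finset.card).sum →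
      parkAux Φ Γ = Φ ++ parkFrom ((Φ.map Finset.card).sum - Φ.length) Γ := by
  induction Γ with
  | nil => intro Φ _; simp [parkAux, parkFrom]
  | cons B Γ ih =>
    intro Φ hΦ
    by_cases hkeep : (Φ.map Finset.card).sum + B.card ≥ Φ.length + 1
    · have hsum : ((Φ ++ [B]).map Finset.card).sum = (Φ.map Finset.card).sum + B.card := by
        simp
      have hlen : (Φ ++ [B]).length = Φ.length + 1 := List.length_append
      have hexcess : (Φ.map Finset.card).sum + B.card - (Φ.length + 1)
          = (Φ.map Finset.card).sum - Φ.length + B.card - 1 := by omega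
      rw [parkAux, if_pos hkeep, ih _ (by omega), hsum, hlen, hexcess, parkFrom,
        if_pos (by omega), List.append_assoc, List.singleton_append]
    · rw [parkAux, if_neg hkeep, ih Φ hΦ, parkFrom, if_neg (by omega)]

theorem park_eq_parkFrom_zero [DecidableEq α] (Γ : List (Finset α)) :
    park Γ = parkFrom 0 Γ := by
  simpa [park] using parkAux_eq_append_parkFrom Γ [] le_rfl

theorem parkFrom_append (Γ₁ Γ₂ : List (Finset α)) :
    ∀ e, parkFrom e (Γ₁ ++ Γ₂) = parkFrom e Γ₁ ++ parkFrom (parkExcess e Γ₁) Γ₂ := by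
  induction Γ₁ with
  | nil => intro e; rfl
  | cons B Γ ih =>
    intro e
    by_cases hkeep : 1 ≤ e + B.card
    · simp [parkFrom, parkExcess, hkeep, ih]
    · simp [parkFrom, parkExcess, hkeep, ih, show e + B.card - 1 = e by omega]

theorem parkExcess_eq_zero (Γ : List (Finset α))
    (hsuffix : ∀ k, ((Γ.drop k).map Finset.card).sum ≤ Γ.length - k) :
    ∀ e, e + (Γ.map Finset.card).sum ≤ Γ.length → parkExcess e Γ = 0 := by
  induction Γ with
  | nil => intro e h; simpa [parkExcess] using h
  | cons B Γ ih =>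
    intro e h
    have htail := hsuffix 1
    simp only [List.drop_one, List.tail_cons, List.length_cons] at htail
    simp only [List.map_cons, List.sum_cons, List.length_cons] at h
    exact ih (fun k => by simpa using hsuffix (k + 1)) _ (by omega)

end ParkFrom

section ParkingFunction

variable {α : Type*} [DecidableEq α]

theorem mem_foldr_union {L : List (Finset α)} {x : α} :
    x ∈ L.foldr (· ∪ ·) ∅ ↔ ∃ B ∈ L, x ∈ B := by
  induction L with
  | nil => simp
  | cons C L ih => simp [ih]

theorem IsWeakSetComp.subset_of_mem {I : Finset α} {L : List (Finset α)}
    (hL : IsWeakSetComp I L) {B : Finset α} (hB : B ∈ L) : B ⊆ I :=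
  hL.2 ▸ fun _ hx => mem_foldr_union.mpr ⟨B, hB, hx⟩

theorem sum_card_eq_card_foldr_union {L : List (Finset α)} (hL : L.Pairwise Disjoint) :
    (L.map Finset.card).sum = (L.foldr (· ∪ ·) ∅).card := by
  induction L with
  | nil => simp
  | cons B L ih =>
    rw [List.pairwise_cons] at hL
    have hdisj : Disjoint B (L.foldr (· ∪ ·) ∅) := Finset.disjoint_left.mpr fun _ hxB hxL =>
      have ⟨C, hC, hxC⟩ := mem_foldr_union.mp hxL
      Finset.disjoint_left.mp (hL.1 C hC) hxB hxC
    rw [List.map_cons, List.sum_cons, ih hL.2, List.foldr_cons,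
      Finset.card_union_of_disjoint hdisj]

theorem IsWeakSetComp.sum_card {I : Finset α} {L : List (Finset α)} (hL : IsWeakSetComp I L) :
    (L.map Finset.card).sum = I.card :=
  hL.2 ▸ sum_card_eq_card_foldr_union hL.1

theorem IsParkingFunction.sum_card_drop_le {I : Finset α} {Φ : List (Finset α)}
    (hΦ : IsParkingFunction I Φ) (k : ℕ) :
    ((Φ.drop k).map Finset.card).sum ≤ Φ.length - k := by
  obtain ⟨hcomp, hlen, hprefix⟩ := hΦ
  have htotal : ((Φ.take k).map Finset.card).sum + ((Φ.drop k).map Finset.card).sum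
      = Φ.length := by
    rw [← List.sum_append, ← List.map_append, List.take_append_drop, hcomp.sum_card, hlen]
  rcases Nat.eq_zero_or_pos k with rfl | hk
  · omega
  by_cases hkΦ : k ≤ Φ.length
  · have := hprefix k hk hkΦ
    omega
  · simp [List.drop_eq_nil_of_le (le_of_not_ge hkΦ)]

theorem sum_card_drop_map_inter_le (L : List (Finset α)) (A : Finset α) (k : ℕ) :
    (((L.map (· ∩ A)).drop k).map Finset.card).sum ≤ ((L.drop k).map Finset.card).sum := by
  rw [← List.map_drop, List.map_map]
  exact List.sum_le_sum fun _ _ => Finset.card_le_card Finset.inter_subset_left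

theorem IsParkingFunction.parkExcess_map_inter {I : Finset α} {Φ : List (Finset α)}
    (hΦ : IsParkingFunction I Φ) (A : Finset α) : parkExcess 0 (Φ.map (· ∩ A)) = 0 := by
  have hsuffix (k : ℕ) :
      (((Φ.map (· ∩ A)).drop k).map Finset.card).sum ≤ (Φ.map (· ∩ A)).length - k :=
    (sum_card_drop_map_inter_le Φ A k).trans (by simpa using hΦ.sum_card_drop_le k)
  exact parkExcess_eq_zero _ hsuffix 0 (by simpa using hsuffix 0)

theorem IsWeakSetComp.map_inter_eq {I : Finset α} {L : List (Finset α)}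
    (hL : IsWeakSetComp I L) (S' : Finset α) : L.map (· ∩ S') = L.map (· ∩ (I ∩ S')) :=
  List.map_congr_left fun B hB => by
    rw [← Finset.inter_assoc, Finset.inter_eq_left.mpr (hL.subset_of_mem hB)]

end ParkingFunction

theorem park_concat_restrict_general {α : Type*} [DecidableEq α]
    (S T S' : Finset α)
    (Φ Ψ : List (Finset α))
    (hΦ : IsParkingFunction S Φ) (hΨ : IsParkingFunction T Ψ) :
    park ((Φ ++ Ψ).map (· ∩ S')) =
      park (Φ.map (· ∩ (S ∩ S'))) ++ park (Ψ.map (· ∩ (T ∩ S'))) := by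
  rw [List.map_append, hΦ.1.map_inter_eq, hΨ.1.map_inter_eq, park_eq_parkFrom_zero,
    parkFrom_append, hΦ.parkExcess_map_inter, ← park_eq_parkFrom_zero, ← park_eq_parkFrom_zero]

theorem park_concat_restrict {α : Type*} [DecidableEq α]
    (S T S' : Finset α) (hST : Disjoint S T) (hS' : S' ⊆ S ∪ T)
    (Φ Ψ : List (Finset α))
    (hΦ : IsParkingFunction S Φ) (hΨ : IsParkingFunction T Ψ) :
    park ((Φ ++ Ψ).map (· ∩ S')) =
      park (Φ.map (· ∩ (S ∩ S'))) ++ park (Ψ.map (· ∩ (T ∩ S'))) :=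
  park_concat_restrict_general S T S' Φ Ψ hΦ hΨ
end

section
/- For every weak set composition Γ of a finite set, every block discarded by the parkization algorithm on Γ is empty; consequently, the set of nonempty blocks of park(Γ) equals the set of nonempty blocks of Γ. In particular, for a parking function Φ = (A_1, …, A_n) on I and any S ⊆ I, the set of nonempty blocks of park(Φ_{∩S}) equals { A_i ∩ S : 1 ≤ i ≤ n, A_i ∩ S ≠ ∅ }; hence the map π sending a parking function to its set partition of nonempty blocks intertwines the parking-function coproduct Δ_{S,T}(Φ) = park(Φ_{∩S}) ⊗ park(Φ_{∩T}) with the restriction coproduct φ ↦ φ|_S ⊗ φ|_T on set partitions. -/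
/-- `keptAux s l i Γ`: the set of (0-indexed) positions of blocks of `Γ` kept by the
parkization algorithm, where `s` elements and `l` blocks have been kept so far and the
first block of `Γ` sits at position `i`. -/
def keptAux {α : Type*} [DecidableEq α] : ℕ → ℕ → ℕ → List (Finset α) → Finset ℕ
  | _, _, _, [] => ∅
  | s, l, i, B :: Γ =>
    if s + B.card ≥ l + 1 then insert i (keptAux (s + B.card) (l + 1) (i + 1) Γ)
    else keptAux s l (i + 1) Γ

/-- The set of positions kept by the parkization algorithm on `Γ`. -/
def kept {α : Type*} [DecidableEq α] (Γ : List (Finset α)) : Finset ℕ :=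
  keptAux 0 0 0 Γ

/-! A block is discarded when `s + |B| ≤ l`, where `s` elements have been kept in `l` blocks.
Since every kept prefix satisfies `l ≤ s` (which is exactly what the test preserves), a
discarded block has `|B| = 0`. Conversely every nonempty block passes the test, and `park Γ` is
a sublist of `Γ`, so the two have the same nonempty blocks. -/

theorem getElem_eq_empty_of_not_mem_keptAux {α : Type*} [DecidableEq α] (Γ : List (Finset α))
    {s l : ℕ} (hls : l ≤ s) (i j : ℕ) (hj : j < Γ.length) (hkept : i + j ∉ keptAux s l i Γ) :
    Γ[j] = ∅ := by
  induction Γ generalizing s l i j with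
  | nil => simp at hj
  | cons B Γ ih =>
    rw [keptAux] at hkept
    split_ifs at hkept with hkeep
    · cases j with
      | zero => simp at hkept
      | succ j =>
        refine ih (by omega) (i + 1) j (by simpa using hj) fun hmem => hkept ?_
        rw [← add_assoc, add_right_comm]
        exact Finset.mem_insert_of_mem hmem
    · cases j with
      | zero => exact Finset.card_eq_zero.mp (show B.card = 0 by omega)
      | succ j =>
        refine ih hls (i + 1) j (by simpa using hj) fun hmem => hkept ?_
        rwa [← add_assoc, add_right_comm]

theorem getElem_eq_empty_of_not_mem_kept {α : Type*} [DecidableEq α] (Γ : List (Finset α))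
    (i : ℕ) (hi : i < Γ.length) (hkept : i ∉ kept Γ) : Γ[i] = ∅ :=
  getElem_eq_empty_of_not_mem_keptAux Γ le_rfl 0 i hi (by rwa [zero_add])

theorem prefix_parkAux {α : Type*} [DecidableEq α] (Φ Γ : List (Finset α)) :
    Φ <+: parkAux Φ Γ := by
  induction Γ generalizing Φ with
  | nil => rw [parkAux]
  | cons B Γ ih =>
    rw [parkAux]
    split_ifs
    · exact (List.prefix_append Φ [B]).trans (ih _)
    · exact ih Φ

theorem parkAux_sublist {α : Type*} [DecidableEq α] (Φ Γ : List (Finset α)) :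
    (parkAux Φ Γ).Sublist (Φ ++ Γ) := by
  induction Γ generalizing Φ with
  | nil => rw [parkAux, List.append_nil]
  | cons B Γ ih =>
    rw [parkAux]
    split_ifs
    · simpa using ih (Φ ++ [B])
    · exact (ih Φ).trans ((List.Sublist.refl Φ).append (List.sublist_cons_self B Γ))

theorem mem_parkAux_of_ne_empty {α : Type*} [DecidableEq α] {Φ Γ : List (Finset α)}
    (hΦ : Φ.length ≤ (Φ.map Finset.card).sum) {B : Finset α} (hB : B ∈ Γ) (hne : B ≠ ∅) :
    B ∈ parkAux Φ Γ := by
  induction Γ generalizing Φ with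
  | nil => simp at hB
  | cons C Γ ih =>
    rw [parkAux]
    obtain rfl | hB := List.mem_cons.mp hB
    · have hpos : 0 < B.card := Finset.card_pos.mpr (Finset.nonempty_iff_ne_empty.mpr hne)
      rw [if_pos (by omega)]
      exact (prefix_parkAux _ Γ).subset (by simp)
    · split_ifs with hkeep
      · refine ih ?_ hB
        simp only [List.length_append, List.length_singleton, List.map_append, List.map_singleton,
          List.sum_append, List.sum_singleton]
        omega
      · exact ih hΦ hB

theorem filter_toFinset_park {α : Type*} [DecidableEq α] (Γ : List (Finset α)) :
    (park Γ).toFinset.filter (· ≠ ∅) = Γ.toFinset.filter (· ≠ ∅) := by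
  ext B
  simp only [Finset.mem_filter, List.mem_toFinset, and_congr_left_iff]
  intro hne
  exact ⟨fun h => by simpa using (parkAux_sublist [] Γ).subset h,
    fun h => mem_parkAux_of_ne_empty (by simp) h hne⟩

theorem discarded_blocks_empty {α : Type*} [DecidableEq α] :
    -- every block discarded by the parkization algorithm is empty
    (∀ Γ : List (Finset α), Γ.Pairwise Disjoint →
      ∀ (i : ℕ) (h : i < Γ.length), i ∉ kept Γ → Γ[i]'h = ∅) ∧
    -- hence `park Γ` and `Γ` have the same nonempty blocks
    (∀ Γ : List (Finset α), Γ.Pairwise Disjoint →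
      (park Γ).toFinset.filter (· ≠ ∅) = Γ.toFinset.filter (· ≠ ∅)) ∧
    -- in particular the nonempty blocks of `park (Φ_{∩S})` are the nonempty `A ∩ S`
    (∀ (I S : Finset α) (Φ : List (Finset α)), IsParkingFunction I Φ → S ⊆ I →
      (park (Φ.map (· ∩ S))).toFinset.filter (· ≠ ∅) =
        (Φ.toFinset.image (· ∩ S)).filter (· ≠ ∅)) := by
  refine ⟨fun Γ _ => getElem_eq_empty_of_not_mem_kept Γ, fun Γ _ => filter_toFinset_park Γ, ?_⟩
  intro I S Φ _ _
  rw [filter_toFinset_park]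
  congr 1
  ext B
  simp [eq_comm]
end

section
/- Let S and T be disjoint finite sets, σ' a permutation of S and σ'' a permutation of T. In the free ℚ-vector spaces with bases the permutations of S, of T, and of S ∪ T respectively, let μ denote the bilinear juxtaposition map determined on basis elements by τ' ⊗ τ'' ↦ τ' ⊎ τ''. Then μ(p_{σ'} ⊗ p_{σ''}) = p_{σ' ⊎ σ''}, where p_σ := Σ_{σ' ≤ σ} μ̈(σ', σ)·σ' is the powersum element defined via the Möbius function μ̈ of the restriction order. -/
/-!
Permutations of a subset `S ⊆ α` are encoded as permutations of `α` fixing the complement of `S`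
pointwise, `σ' ⊎ σ''` is the product `σ' * σ''`, and `juxt` is the product of the group algebra
`ℚ[Perm α]`.

The restriction order is a condition on each orbit separately, and every orbit of `σ' * σ''` is
an orbit of `σ'` (inside `S`) or of `σ''` (inside `T`). Hence juxtaposition is an order
isomorphism from the product of the lower sets of `σ'` and `σ''` onto the lower set of `σ' * σ''`,
carrying each box `[τ', σ'] × [τ'', σ'']` onto the interval `[τ' * τ'', σ' * σ'']`. Both
`μ̈(τ' * τ'', σ' * σ'')` and `μ̈(τ', σ') μ̈(τ'', σ'')` therefore solve the recursion defining the
Möbius function on the box below `(σ', σ'')`, so they agree, and expanding `p_{σ'} p_{σ''}` in the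
group algebra gives `p_{σ' * σ''}`.
-/

open scoped Classical

variable {α : Type*} [Fintype α] [DecidableEq α]

/-- The restriction order on permutations: `RestrLE τ σ` holds iff every `τ`-orbit is
contained in a `σ`-orbit and `τ` acts on each of its orbits as the first-return map
of `σ`. -/
def RestrLE (τ σ : Equiv.Perm α) : Prop :=
  (∀ a b : α, τ.SameCycle a b → σ.SameCycle a b) ∧
  ∀ a : α, ∃ k : ℕ, 0 < k ∧ τ a = (σ ^ k) a ∧
    ∀ j : ℕ, 0 < j → j < k → ¬ τ.SameCycle a ((σ ^ j) a)

/-- The powersum element `p_σ = Σ_{τ ≤ σ} μ̈(τ, σ) · τ` in the free vector space on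
permutations, for a given Möbius function `mu` of the restriction order. -/
noncomputable def powersum (mu : Equiv.Perm α → Equiv.Perm α → ℚ) (σ : Equiv.Perm α) :
    Equiv.Perm α →₀ ℚ :=
  ∑ τ ∈ Finset.univ.filter (fun τ => RestrLE τ σ), Finsupp.single τ (mu τ σ)

/-- The bilinear juxtaposition map, determined on basis elements by
`τ' ⊗ τ'' ↦ τ' * τ''`. -/
noncomputable def juxt (p q : Equiv.Perm α →₀ ℚ) : Equiv.Perm α →₀ ℚ :=
  p.sum fun τ' c => q.sum fun τ'' d => Finsupp.single (τ' * τ'') (c * d)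

open Equiv Finset

section Local

open Set

variable {β : Type*} {τ σ τ₁ σ₁ : Perm β} {a : β}

theorem Equiv.Perm.pow_apply_eq_of_eqOn {π ρ : Perm β} {U : Set β} (hπ : MapsTo π U U)
    (h : EqOn π ρ U) (n : ℕ) {a : β} (ha : a ∈ U) : (π ^ n) a = (ρ ^ n) a := by
  induction n generalizing a with
  | zero => rfl
  | succ n ih => rw [pow_succ, pow_succ, Perm.mul_apply, Perm.mul_apply, ← h ha, ih (hπ ha)]

theorem Equiv.Perm.sameCycle_iff_of_eqOn [Finite β] {π ρ : Perm β} {U : Set β}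
    (hπ : MapsTo π U U) (h : EqOn π ρ U) (ha : a ∈ U) (b : β) :
    π.SameCycle a b ↔ ρ.SameCycle a b := by
  have key {π ρ : Perm β} (hπ : MapsTo π U U) (h : EqOn π ρ U) :
      π.SameCycle a b → ρ.SameCycle a b := fun hab => by
    obtain ⟨n, rfl⟩ := hab.exists_nat_pow_eq
    exact ⟨n, by rw [zpow_natCast, Perm.pow_apply_eq_of_eqOn hπ h n ha]⟩
  exact ⟨key hπ h, key (hπ.congr h) h.symm⟩

def RestrLEAt (τ σ : Perm β) (a : β) : Prop :=
  (∀ b, τ.SameCycle a b → σ.SameCycle a b) ∧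
  ∃ k : ℕ, 0 < k ∧ τ a = (σ ^ k) a ∧ ∀ j : ℕ, 0 < j → j < k → ¬ τ.SameCycle a ((σ ^ j) a)

theorem restrLE_iff_forall_restrLEAt : RestrLE τ σ ↔ ∀ a, RestrLEAt τ σ a :=
  forall_and.symm

theorem restrLEAt_of_apply_eq_self (hτ : τ a = a) (hσ : σ a = a) : RestrLEAt τ σ a := by
  refine ⟨fun b hab => ?_, 1, one_pos, by rw [pow_one, hτ, hσ], fun j hj hj1 => by omega⟩
  rw [← hab.eq_of_left hτ]

theorem restrLEAt_congr [Finite β] {U : Set β} (hτ : MapsTo τ U U) (hσ : MapsTo σ U U)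
    (hτU : EqOn τ τ₁ U) (hσU : EqOn σ σ₁ U) (ha : a ∈ U) :
    RestrLEAt τ σ a ↔ RestrLEAt τ₁ σ₁ a := by
  simp only [RestrLEAt, Perm.sameCycle_iff_of_eqOn hτ hτU ha,
    Perm.sameCycle_iff_of_eqOn hσ hσU ha, Perm.pow_apply_eq_of_eqOn hσ hσU _ ha, hτU ha]

theorem restrLE_refl (σ : Perm β) : RestrLE σ σ :=
  ⟨fun _ _ h => h, fun a => ⟨1, one_pos, by rw [pow_one], fun j hj hj1 => by omega⟩⟩

theorem RestrLE.apply_eq_self (h : RestrLE τ σ) (ha : σ a = a) : τ a = a :=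
  ((h.1 a (τ a) ⟨1, rfl⟩).eq_of_left ha).symm

theorem RestrLE.eq_of_sameCycle (h : RestrLE τ σ)
    (hσ : ∀ a b, σ.SameCycle a b → τ.SameCycle a b) : τ = σ := by
  ext a
  obtain ⟨k, hk, hτa, hfirst⟩ := h.2 a
  obtain rfl : k = 1 := by
    by_contra hk1
    exact hfirst 1 one_pos (by omega) (hσ _ _ ⟨1, rfl⟩)
  rw [hτa, pow_one]

theorem restrLE_one [Finite β] (σ : Perm β) : RestrLE 1 σ := by
  refine ⟨fun a b hab => by rw [Perm.sameCycle_one.1 hab], fun a => ?_⟩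
  have hper : a ∈ Function.periodicPts σ :=
    ⟨orderOf σ, orderOf_pos σ, by
      rw [Function.IsPeriodicPt, Function.IsFixedPt, ← Perm.coe_pow, pow_orderOf_eq_one,
        Perm.one_apply]⟩
  refine ⟨Function.minimalPeriod σ a, Function.minimalPeriod_pos_of_mem_periodicPts hper, ?_,
    fun j hj hjk hsc => ?_⟩
  · rw [Perm.coe_pow, Function.iterate_minimalPeriod, Perm.one_apply]
  · rw [Perm.sameCycle_one, Perm.coe_pow] at hsc
    exact Function.not_isPeriodicPt_of_pos_of_lt_minimalPeriod hj.ne' hjk hsc.symm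

end Local

section Juxtaposition

open Set

variable {β : Type*} {S T : Finset β} {τ σ τ' τ'' σ' σ'' : Perm β} {a : β}

theorem Equiv.Perm.mapsTo_of_forall_notMem (h : ∀ a ∉ S, σ a = a) : MapsTo σ S S := by
  intro a ha
  by_contra hσa
  rw [σ.injective (h _ hσa)] at hσa
  exact hσa ha

theorem RestrLE.forall_notMem (h : RestrLE τ σ) (hσ : ∀ a ∉ S, σ a = a) :
    ∀ a ∉ S, τ a = a :=
  fun a ha => h.apply_eq_self (hσ a ha)

theorem eqOn_mul_left_of_disjoint (hST : Disjoint S T) (hτ'' : ∀ a ∉ T, τ'' a = a) :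
    EqOn (τ' * τ'') τ' S :=
  fun a ha => by rw [Perm.mul_apply, hτ'' a (disjoint_left.1 hST ha)]

theorem perm_disjoint_of_disjoint (hST : Disjoint S T) (hτ' : ∀ a ∉ S, τ' a = a)
    (hτ'' : ∀ a ∉ T, τ'' a = a) : Perm.Disjoint τ' τ'' := fun a =>
  if ha : a ∈ S then Or.inr (hτ'' a (disjoint_left.1 hST ha)) else Or.inl (hτ' a ha)

theorem mapsTo_mul_left_of_disjoint (hST : Disjoint S T) (hτ' : ∀ a ∉ S, τ' a = a)
    (hτ'' : ∀ a ∉ T, τ'' a = a) : MapsTo (τ' * τ'') S S :=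
  (Perm.mapsTo_of_forall_notMem hτ').congr (eqOn_mul_left_of_disjoint hST hτ'').symm

theorem mul_eq_mul_iff_of_disjoint (hST : Disjoint S T) (hτ' : ∀ a ∉ S, τ' a = a)
    (hτ'' : ∀ a ∉ T, τ'' a = a) (hσ' : ∀ a ∉ S, σ' a = a) (hσ'' : ∀ a ∉ T, σ'' a = a) :
    τ' * τ'' = σ' * σ'' ↔ τ' = σ' ∧ τ'' = σ'' := by
  refine ⟨fun h => ?_, fun ⟨h', h''⟩ => h' ▸ h'' ▸ rfl⟩
  have h' : τ' = σ' := by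
    ext a
    by_cases ha : a ∈ S
    · rw [← eqOn_mul_left_of_disjoint hST hτ'' ha, h, eqOn_mul_left_of_disjoint hST hσ'' ha]
    · rw [hτ' a ha, hσ' a ha]
  exact ⟨h', mul_left_cancel (h' ▸ h)⟩

variable [Finite β]

theorem restrLEAt_mul_iff_of_mem_left (hST : Disjoint S T) (hτ' : ∀ a ∉ S, τ' a = a)
    (hτ'' : ∀ a ∉ T, τ'' a = a) (hσ' : ∀ a ∉ S, σ' a = a) (hσ'' : ∀ a ∉ T, σ'' a = a)
    (ha : a ∈ S) : RestrLEAt (τ' * τ'') (σ' * σ'') a ↔ RestrLEAt τ' σ' a :=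
  restrLEAt_congr (mapsTo_mul_left_of_disjoint hST hτ' hτ'')
    (mapsTo_mul_left_of_disjoint hST hσ' hσ'') (eqOn_mul_left_of_disjoint hST hτ'')
    (eqOn_mul_left_of_disjoint hST hσ'') ha

theorem restrLE_mul_iff (hST : Disjoint S T) (hτ' : ∀ a ∉ S, τ' a = a)
    (hτ'' : ∀ a ∉ T, τ'' a = a) (hσ' : ∀ a ∉ S, σ' a = a) (hσ'' : ∀ a ∉ T, σ'' a = a) :
    RestrLE (τ' * τ'') (σ' * σ'') ↔ RestrLE τ' σ' ∧ RestrLE τ'' σ'' := by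
  simp only [restrLE_iff_forall_restrLEAt, ← forall_and]
  refine forall_congr' fun a => ?_
  by_cases haS : a ∈ S
  · have haT : a ∉ T := disjoint_left.1 hST haS
    rw [restrLEAt_mul_iff_of_mem_left hST hτ' hτ'' hσ' hσ'' haS, iff_self_and]
    exact fun _ => restrLEAt_of_apply_eq_self (hτ'' a haT) (hσ'' a haT)
  by_cases haT : a ∈ T
  · rw [(perm_disjoint_of_disjoint hST hτ' hτ'').commute.eq,
      (perm_disjoint_of_disjoint hST hσ' hσ'').commute.eq,
      restrLEAt_mul_iff_of_mem_left hST.symm hτ'' hτ' hσ'' hσ' haT, iff_and_self]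
    exact fun _ => restrLEAt_of_apply_eq_self (hτ' a haS) (hσ' a haS)
  · exact iff_of_true
      (restrLEAt_of_apply_eq_self (by rw [Perm.mul_apply, hτ'' a haT, hτ' a haS])
        (by rw [Perm.mul_apply, hσ'' a haT, hσ' a haS]))
      ⟨restrLEAt_of_apply_eq_self (hτ' a haS) (hσ' a haS),
        restrLEAt_of_apply_eq_self (hτ'' a haT) (hσ'' a haT)⟩

theorem exists_mul_eq_of_mapsTo (hST : Disjoint S T) (hS : MapsTo τ S S) (hT : MapsTo τ T T)
    (hout : ∀ a ∉ S, a ∉ T → τ a = a) :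
    ∃ τ' τ'' : Perm β, (∀ a ∉ S, τ' a = a) ∧ (∀ a ∉ T, τ'' a = a) ∧ τ' * τ'' = τ := by
  refine ⟨Perm.ofSubtype (τ.subtypePermOfFintype (p := (· ∈ S)) hS),
    Perm.ofSubtype (τ.subtypePermOfFintype (p := (· ∈ T)) hT),
    fun a ha => Perm.ofSubtype_apply_of_not_mem _ ha,
    fun a ha => Perm.ofSubtype_apply_of_not_mem _ ha, ?_⟩
  ext a
  by_cases haS : a ∈ S
  · rw [Perm.mul_apply, Perm.ofSubtype_apply_of_not_mem _ (disjoint_left.1 hST haS),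
      Perm.ofSubtype_apply_of_mem _ haS, Perm.subtypePermOfFintype_apply τ hS]
  by_cases haT : a ∈ T
  · rw [Perm.mul_apply, Perm.ofSubtype_apply_of_mem _ haT, Perm.subtypePermOfFintype_apply τ hT,
      Perm.ofSubtype_apply_of_not_mem _ (disjoint_right.1 hST (hT haT))]
  · rw [Perm.mul_apply, Perm.ofSubtype_apply_of_not_mem _ haT,
      Perm.ofSubtype_apply_of_not_mem _ haS, hout a haS haT]

theorem RestrLE.exists_mul_eq (hST : Disjoint S T) (hσ' : ∀ a ∉ S, σ' a = a)
    (hσ'' : ∀ a ∉ T, σ'' a = a) (h : RestrLE τ (σ' * σ'')) :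
    ∃ τ' τ'' : Perm β, RestrLE τ' σ' ∧ RestrLE τ'' σ'' ∧ τ' * τ'' = τ := by
  have hmapsTo {U : Set β} (hU : MapsTo (σ' * σ'') U U) : MapsTo τ U U := fun a ha => by
    obtain ⟨k, -, hτa, -⟩ := h.2 a
    exact hτa ▸ hU.perm_pow k ha
  have hS := hmapsTo (mapsTo_mul_left_of_disjoint hST hσ' hσ'')
  have hT := hmapsTo (U := T) <| by
    rw [(perm_disjoint_of_disjoint hST hσ' hσ'').commute.eq]
    exact mapsTo_mul_left_of_disjoint hST.symm hσ'' hσ'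
  obtain ⟨τ', τ'', hτ', hτ'', rfl⟩ := exists_mul_eq_of_mapsTo hST hS hT fun a haS haT =>
    h.apply_eq_self (by rw [Perm.mul_apply, hσ'' a haT, hσ' a haS])
  exact ⟨τ', τ'', (restrLE_mul_iff hST hτ' hτ'' hσ' hσ'').1 h |>.1,
    (restrLE_mul_iff hST hτ' hτ'' hσ' hσ'').1 h |>.2, rfl⟩

end Juxtaposition

section Intervals

variable {β : Type*} [Fintype β] [DecidableEq β] {S T : Finset β} {τ σ τ' τ'' σ' σ'' : Perm β}

noncomputable def restrIcc (τ σ : Perm β) : Finset (Perm β) :=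
  univ.filter fun ρ => RestrLE τ ρ ∧ RestrLE ρ σ

@[simp]
theorem mem_restrIcc {ρ : Perm β} : ρ ∈ restrIcc τ σ ↔ RestrLE τ ρ ∧ RestrLE ρ σ := by
  simp [restrIcc]

theorem filter_restrLE_eq_restrIcc_one (σ : Perm β) :
    univ.filter (RestrLE · σ) = restrIcc 1 σ := by
  ext ρ
  simp [restrLE_one]

theorem sum_restrIcc_mul {M : Type*} [AddCommMonoid M] (hST : Disjoint S T)
    (hτ' : ∀ a ∉ S, τ' a = a) (hτ'' : ∀ a ∉ T, τ'' a = a) (hσ' : ∀ a ∉ S, σ' a = a)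
    (hσ'' : ∀ a ∉ T, σ'' a = a) (f : Perm β → M) :
    ∑ ρ ∈ restrIcc (τ' * τ'') (σ' * σ''), f ρ =
      ∑ ρ' ∈ restrIcc τ' σ', ∑ ρ'' ∈ restrIcc τ'' σ'', f (ρ' * ρ'') := by
  rw [← sum_product']
  symm
  refine sum_bij (fun p _ => p.1 * p.2) ?_ ?_ ?_ fun _ _ => rfl
  · rintro ⟨ρ', ρ''⟩ hp
    simp only [mem_product, mem_restrIcc] at hp ⊢
    obtain ⟨⟨h₁', h₂'⟩, h₁'', h₂''⟩ := hp
    have hρ' := h₂'.forall_notMem hσ'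
    have hρ'' := h₂''.forall_notMem hσ''
    exact ⟨(restrLE_mul_iff hST hτ' hτ'' hρ' hρ'').2 ⟨h₁', h₁''⟩,
      (restrLE_mul_iff hST hρ' hρ'' hσ' hσ'').2 ⟨h₂', h₂''⟩⟩
  · rintro ⟨ρ', ρ''⟩ hp ⟨π', π''⟩ hq h
    simp only [mem_product, mem_restrIcc] at hp hq
    exact Prod.ext_iff.2 <| (mul_eq_mul_iff_of_disjoint hST (hp.1.2.forall_notMem hσ')
      (hp.2.2.forall_notMem hσ'') (hq.1.2.forall_notMem hσ') (hq.2.2.forall_notMem hσ'')).1 h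
  · intro ρ hρ
    rw [mem_restrIcc] at hρ
    obtain ⟨ρ', ρ'', h₂', h₂'', rfl⟩ := hρ.2.exists_mul_eq hST hσ' hσ''
    have h₁ := (restrLE_mul_iff hST hτ' hτ'' (h₂'.forall_notMem hσ')
      (h₂''.forall_notMem hσ'')).1 hρ.1
    exact ⟨(ρ', ρ''), by simp [h₁, h₂', h₂''], rfl⟩

theorem sum_restrLE_mul {M : Type*} [AddCommMonoid M] (hST : Disjoint S T)
    (hσ' : ∀ a ∉ S, σ' a = a) (hσ'' : ∀ a ∉ T, σ'' a = a) (f : Perm β → M) :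
    ∑ ρ ∈ univ.filter (RestrLE · (σ' * σ'')), f ρ =
      ∑ ρ' ∈ univ.filter (RestrLE · σ'), ∑ ρ'' ∈ univ.filter (RestrLE · σ''), f (ρ' * ρ'') := by
  simpa only [filter_restrLE_eq_restrIcc_one, one_mul] using
    sum_restrIcc_mul hST (τ' := 1) (τ'' := 1) (fun _ _ => rfl) (fun _ _ => rfl) hσ' hσ'' f

end Intervals

theorem eq_zero_of_sum_Icc_eq_zero {P M : Type*} [Fintype P] [AddCommMonoid M]
    (r : P → P → Prop) (m : P → ℕ) (hr : ∀ x, r x x) (hm : ∀ x y, r x y → x ≠ y → m x < m y)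
    {top : P} {f : P → M} (htop : f top = 0)
    (hsum : ∀ x, r x top → x ≠ top → ∑ y ∈ univ.filter (fun y => r x y ∧ r y top), f y = 0)
    (x : P) (hx : r x top) : f x = 0 := by
  induction hn : m top - m x using Nat.strong_induction_on generalizing x with
  | _ n ih =>
    by_cases hxtop : x = top
    · rwa [hxtop]
    rw [← hsum x hx hxtop, sum_eq_single_of_mem x (by simp [hr x, hx])]
    intro y hy hyx
    rw [mem_filter] at hy
    have hmy : m y ≤ m top := by
      rcases eq_or_ne y top with rfl | hytop
      exacts [le_rfl, (hm _ _ hy.2.2 hytop).le]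
    exact ih _ (by have := hm _ _ hy.2.1 (Ne.symm hyx); omega) y hy.2.2 rfl

section SameCyclePairs

variable {β : Type*} [Fintype β] {τ σ : Perm β}

noncomputable def sameCyclePairs (σ : Perm β) : Finset (β × β) :=
  univ.filter fun p => σ.SameCycle p.1 p.2

theorem RestrLE.sameCyclePairs_subset (h : RestrLE τ σ) :
    sameCyclePairs τ ⊆ sameCyclePairs σ := by
  intro p
  simpa [sameCyclePairs] using h.1 p.1 p.2

theorem RestrLE.sameCyclePairs_ssubset (h : RestrLE τ σ) (hne : τ ≠ σ) :
    sameCyclePairs τ ⊂ sameCyclePairs σ := by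
  refine h.sameCyclePairs_subset.ssubset_of_ne fun heq => hne (h.eq_of_sameCycle fun a b hab => ?_)
  have hab : (a, b) ∈ sameCyclePairs σ := by simpa [sameCyclePairs] using hab
  rw [← heq] at hab
  simpa [sameCyclePairs] using hab

end SameCyclePairs

section Mobius

variable {β : Type*} [Fintype β] [DecidableEq β] {S T : Finset β} {τ' τ'' σ' σ'' : Perm β}
  {R : Type*} [CommRing R] {mu : Perm β → Perm β → R}

theorem mu_mul_mul (hmu_refl : ∀ σ, mu σ σ = 1)
    (hmu_sum : ∀ τ σ, RestrLE τ σ → τ ≠ σ → ∑ ρ ∈ restrIcc τ σ, mu ρ σ = 0)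
    (hST : Disjoint S T) (hσ' : ∀ a ∉ S, σ' a = a) (hσ'' : ∀ a ∉ T, σ'' a = a)
    (hτ' : RestrLE τ' σ') (hτ'' : RestrLE τ'' σ'') :
    mu (τ' * τ'') (σ' * σ'') = mu τ' σ' * mu τ'' σ'' := by
  let r (p q : Perm β × Perm β) : Prop := RestrLE p.1 q.1 ∧ RestrLE p.2 q.2
  have hm (p q) (hpq : r p q) (hne : p ≠ q) :
      #(sameCyclePairs p.1) + #(sameCyclePairs p.2) <
        #(sameCyclePairs q.1) + #(sameCyclePairs q.2) := by
    have h₁ := card_le_card hpq.1.sameCyclePairs_subset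
    have h₂ := card_le_card hpq.2.sameCyclePairs_subset
    by_cases he : p.1 = q.1
    · have := card_lt_card (hpq.2.sameCyclePairs_ssubset fun h => hne (Prod.ext he h))
      omega
    · have := card_lt_card (hpq.1.sameCyclePairs_ssubset he)
      omega
  refine sub_eq_zero.1 <| eq_zero_of_sum_Icc_eq_zero r _
    (fun p => ⟨restrLE_refl p.1, restrLE_refl p.2⟩) hm (top := (σ', σ''))
    (f := fun p => mu (p.1 * p.2) (σ' * σ'') - mu p.1 σ' * mu p.2 σ'')
    (by simp [hmu_refl]) ?_ (τ', τ'') ⟨hτ', hτ''⟩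
  rintro ⟨τ', τ''⟩ ⟨hτ' : RestrLE τ' σ', hτ'' : RestrLE τ'' σ''⟩ hne
  have hfix' := hτ'.forall_notMem hσ'
  have hfix'' := hτ''.forall_notMem hσ''
  have hmul_ne : τ' * τ'' ≠ σ' * σ'' := fun h =>
    hne (Prod.ext_iff.2 ((mul_eq_mul_iff_of_disjoint hST hfix' hfix'' hσ' hσ'').1 h))
  have hprod : (∑ ρ' ∈ restrIcc τ' σ', mu ρ' σ') * ∑ ρ'' ∈ restrIcc τ'' σ'', mu ρ'' σ'' = 0 := by
    by_cases he : τ' = σ'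
    · rw [hmu_sum τ'' σ'' hτ'' fun h => hne (Prod.ext he h), mul_zero]
    · rw [hmu_sum τ' σ' hτ' he, zero_mul]
  convert_to ∑ p ∈ restrIcc τ' σ' ×ˢ restrIcc τ'' σ'',
      (mu (p.1 * p.2) (σ' * σ'') - mu p.1 σ' * mu p.2 σ'') = 0 using 2
  · ext ⟨ρ', ρ''⟩
    simp only [r, mem_filter, mem_univ, true_and, mem_product, mem_restrIcc]
    tauto
  rw [sum_product]
  simp only [sum_sub_distrib]
  rw [← sum_mul_sum, hprod, ← sum_restrIcc_mul hST hfix' hfix'' hσ' hσ'' (mu · (σ' * σ'')),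
    hmu_sum _ _ ((restrLE_mul_iff hST hfix' hfix'' hσ' hσ'').2 ⟨hτ', hτ''⟩) hmul_ne, sub_zero]

end Mobius

theorem juxt_eq_coeff_mul {β : Type*} (p q : Perm β →₀ ℚ) :
    juxt p q = (MonoidAlgebra.ofCoeff p * MonoidAlgebra.ofCoeff q).coeff := by
  simp [juxt, MonoidAlgebra.mul_def, MonoidAlgebra.coeff_finsuppSum, MonoidAlgebra.coeff_single]

theorem juxt_sum_single {β : Type*} (s t : Finset (Perm β)) (c d : Perm β → ℚ) :
    juxt (∑ τ ∈ s, Finsupp.single τ (c τ)) (∑ τ ∈ t, Finsupp.single τ (d τ)) =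
      ∑ τ' ∈ s, ∑ τ'' ∈ t, Finsupp.single (τ' * τ'') (c τ' * d τ'') := by
  simp only [juxt_eq_coeff_mul, MonoidAlgebra.ofCoeff_sum]
  change ((∑ τ ∈ s, MonoidAlgebra.single τ (c τ)) *
    ∑ τ ∈ t, MonoidAlgebra.single τ (d τ)).coeff = _
  simp only [sum_mul_sum, MonoidAlgebra.single_mul_single, MonoidAlgebra.coeff_sum,
    MonoidAlgebra.coeff_single]

theorem juxt_powersum (S T : Finset α) (hST : Disjoint S T)
    (σ' σ'' : Equiv.Perm α)
    (hσ' : ∀ a ∉ S, σ' a = a) (hσ'' : ∀ a ∉ T, σ'' a = a)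
    (mu : Equiv.Perm α → Equiv.Perm α → ℚ)
    (hmu_refl : ∀ σ : Equiv.Perm α, mu σ σ = 1)
    (hmu_sum : ∀ τ σ : Equiv.Perm α, RestrLE τ σ → τ ≠ σ →
      ∑ ρ ∈ Finset.univ.filter (fun ρ => RestrLE τ ρ ∧ RestrLE ρ σ), mu ρ σ = 0) :
    juxt (powersum mu σ') (powersum mu σ'') = powersum mu (σ' * σ'') := by
  rw [powersum, powersum, powersum, juxt_sum_single, sum_restrLE_mul hST hσ' hσ'']
  refine sum_congr rfl fun τ' hτ' => sum_congr rfl fun τ'' hτ'' => ?_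
  rw [mu_mul_mul hmu_refl hmu_sum hST hσ' hσ'' (mem_filter.1 hτ').2 (mem_filter.1 hτ'').2]
end
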